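/- The kernel of the linear map M_F is exactly the 4-dimensional subspace consisting of all vectors c^F_0(λ1,λ2,λ3,λ4) = (−λ2+λ3, λ1+λ3−λ4, −λ1−2λ3, λ1−λ2+2λ3, −λ1−λ2, −λ1−λ3−λ4, −λ4, −λ3, λ1, λ2−λ3, λ3+λ4, λ4, λ2−λ3+λ4, λ2, λ3) ∈ ℝ^15 with λ1, λ2, λ3, λ4 ∈ ℝ, and the map (λ1,λ2,λ3,λ4) ↦ c^F_0(λ1,λ2,λ3,λ4) is injective. -/

import Mathlib

noncomputable section

/-- The coefficient matrix `M_F` of the type-F divergence system: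
rows are `d47,…,d61`, columns are `c54,…,c68`. -/
def MF : Matrix (Fin 15) (Fin 15) ℝ :=
  !![0, 0, 0, 1, 1, 0, 0, 0, 0, 2, 0, 0, 0, 0, 0;
    0, 0, 1, 1, 0, 0, 0, 0, 0, 0, 0, 0, 0, 1, 0;
    0, 0, 0, 1, 0, 1, 0, 0, 0, 0, 0, 0, 1, 0, 0;
    0, 0, 0, 0, 1, 0, 0, 0, 1, 0, 0, 0, 0, 1, 0;
    0, 1, 0, 0, 1, 0, 0, 0, 0, 0, 0, 0, 1, 0, 0;
    0, 0, 0, 0, 0, 1, 0, 0, 1, 0, 1, 0, 0, 0, 0;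
    0, 1, 0, 0, 0, 1, 0, 0, 0, 0, 0, 2, 0, 0, 0;
    1, 0, 0, 0, 0, 0, 1, 0, 0, 0, 0, 0, 1, 0, 0;
    0, 0, 0, 0, 0, 0, 1, 1, 0, 0, 1, 0, 0, 0, 0;
    0, 0, 0, 0, 0, 0, 1, 0, 0, 0, 0, 1, 0, 0, 0;
    1, 0, 0, 0, 0, 0, 0, 1, 0, 0, 0, 0, 0, 1, 0;
    0, 0, 0, 0, 0, 0, 0, 1, 0, 0, 0, 0, 0, 0, 1;
    0, 0, 1, 0, 0, 0, 0, 0, 1, 0, 0, 0, 0, 0, 2;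
    1, 0, 0, 0, 0, 0, 0, 0, 0, 1, 0, 0, 0, 0, 0;
    0, 1, 1, 0, 0, 0, 0, 0, 0, 0, 1, 0, 0, 0, 0]

/-- The kernel parametrization `c^F_0(λ1,λ2,λ3,λ4) ∈ ℝ^15`. -/
def cF0 (l1 l2 l3 l4 : ℝ) : Fin 15 → ℝ :=
  ![-l2 + l3,
    l1 + l3 - l4,
    -l1 - 2 * l3,
    l1 - l2 + 2 * l3,
    -l1 - l2,
    -l1 - l3 - l4,
    -l4,
    -l3,
    l1,
    l2 - l3,
    l3 + l4,
    l4,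
    l2 - l3 + l4,
    l2,
    l3]

/-!
The coordinates `c62, c67, c68, c65` (indices 8, 13, 14, 11) are free: they are read off as
`λ1, λ2, λ3, λ4` from `c^F_0`, and the fifteen equations `M_F c = 0` determine the remaining
coordinates from them by back-substitution.
-/

theorem MF_mulVec (c : Fin 15 → ℝ) :
    MF.mulVec c = ![c 3 + c 4 + 2 * c 9, c 2 + c 3 + c 13, c 3 + c 5 + c 12, c 4 + c 8 + c 13,
      c 1 + c 4 + c 12, c 5 + c 8 + c 10, c 1 + c 5 + 2 * c 11, c 0 + c 6 + c 12,
      c 6 + c 7 + c 10, c 6 + c 11, c 0 + c 7 + c 13, c 7 + c 14, c 2 + c 8 + 2 * c 14,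
      c 0 + c 9, c 1 + c 2 + c 10] := by
  ext i
  fin_cases i <;> simp [MF, Matrix.mulVec, dotProduct, Fin.sum_univ_succ] <;> ring

theorem MF_mulVec_cF0 (l1 l2 l3 l4 : ℝ) : MF.mulVec (cF0 l1 l2 l3 l4) = 0 := by
  ext i
  fin_cases i <;> simp [MF_mulVec, cF0] <;> ring

theorem eq_cF0_of_MF_mulVec_eq_zero {c : Fin 15 → ℝ} (h : MF.mulVec c = 0) :
    c = cF0 (c 8) (c 13) (c 14) (c 11) := by
  rw [MF_mulVec] at h
  simp only [Matrix.cons_eq_zero_iff, Matrix.zero_empty, and_true] at h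
  obtain ⟨h0, h1, h2, h3, h4, h5, h6, h7, h8, h9, h10, h11, h12, h13, h14⟩ := h
  ext i
  fin_cases i <;> simp [cF0] <;> linarith

theorem cF0_leftInverse :
    Function.LeftInverse (fun c : Fin 15 → ℝ => (c 8, c 13, c 14, c 11))
      (fun l : ℝ × ℝ × ℝ × ℝ => cF0 l.1 l.2.1 l.2.2.1 l.2.2.2) := fun l => by
  simp [cF0]

/-- The kernel of `M_F` is exactly the set of vectors `c^F_0(λ1,λ2,λ3,λ4)`,
and the parametrization is injective. -/
theorem MF_kernel :
    (∀ c : Fin 15 → ℝ, MF.mulVec c = 0 ↔ ∃ l1 l2 l3 l4 : ℝ, c = cF0 l1 l2 l3 l4) ∧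
    Function.Injective (fun l : ℝ × ℝ × ℝ × ℝ => cF0 l.1 l.2.1 l.2.2.1 l.2.2.2) := by
  refine ⟨fun c => ⟨fun h => ⟨_, _, _, _, eq_cF0_of_MF_mulVec_eq_zero h⟩, ?_⟩, ?_⟩
  · rintro ⟨l1, l2, l3, l4, rfl⟩
    exact MF_mulVec_cF0 l1 l2 l3 l4
  · exact cF0_leftInverse.injective
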